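/- arXiv:2202.07679 — 5 statements merged into one kernel-verified Lean document; each statement's English description precedes it below -/
import Mathlib

section
/- Fix z ∈ ℝ^d at which g is continuous. For any sequence of bandwidths b_m > 0 with b_m → 0 as m → ∞, lim_{m → ∞} m·b_m^d·Var(ĝ_{b_m}(z)) = g(z)·∫ φ(x)² dx, where ĝ_{b_m} is the estimator built from m i.i.d. samples. -/
/-!
With `X_i = φ((z - Z_i)/b)` the estimator is an average of i.i.d. terms, so
`m b^d Var ĝ_b(z) = b^{-d} Var X_1`. The substitution `x = z - b u` gives
`E X_1 = b^d ∫ φ(u) g(z - b u) du` and `E X_1² = b^d ∫ φ(u)² g(z - b u) du`, hence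
`m b^d Var ĝ_b(z) = ∫ φ² g(z - b ·) - b^d (∫ φ g(z - b ·))²`. Both integrals are continuous in `b`
at `0` by dominated convergence (`g` is bounded and continuous at `z`), so the first tends to
`g(z) ∫ φ²` while the second term vanishes with `b^d`.
-/

open MeasureTheory ProbabilityTheory Filter

/-- Kernel density estimator `ĝ_b(z) = (1/(m b^d)) Σ_{i<m} φ((z − Z_i)/b)`. -/
noncomputable def kde {Ω : Type*} (d m : ℕ) (φ : (Fin d → ℝ) → ℝ)
    (Z : ℕ → Ω → (Fin d → ℝ)) (b : ℝ) (z : Fin d → ℝ) (ω : Ω) : ℝ :=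
  (1 / (m * b ^ d)) * ∑ i ∈ Finset.range m, φ (b⁻¹ • (z - Z i ω))

open Topology

section Density

variable {α Ω : Type*} [MeasurableSpace α] [MeasurableSpace Ω] {μ : Measure α} {g : α → ℝ}

theorem integral_comp_of_map_eq_withDensity {P : Measure Ω} {X : Ω → α} (hX : AEMeasurable X P)
    (hg : AEMeasurable g μ) (hgnn : ∀ x, 0 ≤ g x)
    (hlaw : P.map X = μ.withDensity fun x => ENNReal.ofReal (g x))
    {h : α → ℝ} (hh : AEStronglyMeasurable h (P.map X)) :
    ∫ ω, h (X ω) ∂P = ∫ x, g x * h x ∂μ := by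
  rw [← integral_map hX hh, hlaw, integral_withDensity_eq_integral_toReal_smul₀
    hg.ennreal_ofReal (ae_of_all _ fun _ => ENNReal.ofReal_lt_top)]
  simp only [ENNReal.toReal_ofReal (hgnn _), smul_eq_mul]

theorem MeasureTheory.Integrable.withDensity_ofReal_of_le {h : α → ℝ} (hh : Integrable h μ)
    {M : ℝ} (hgM : ∀ x, g x ≤ M) : Integrable h (μ.withDensity fun x => ENNReal.ofReal (g x)) := by
  refine (hh.smul_measure (ENNReal.ofReal_ne_top (r := M))).mono_measure ?_
  rw [← withDensity_const]
  exact withDensity_mono (ae_of_all _ fun x => ENNReal.ofReal_le_ofReal (hgM x))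

end Density

section KernelSmoothing

variable {E : Type*} [NormedAddCommGroup E] [NormedSpace ℝ E] [MeasurableSpace E] (μ : Measure E)

noncomputable def kernelSmoothing (ψ g : E → ℝ) (z : E) (c : ℝ) : ℝ :=
  ∫ u, ψ u * g (z - c • u) ∂μ

variable {μ} {ψ g : E → ℝ} {z : E} {c : ℝ}

theorem kernelSmoothing_zero : kernelSmoothing μ ψ g z 0 = g z * ∫ u, ψ u ∂μ := by
  simp [kernelSmoothing, integral_mul_const, mul_comm]

variable [FiniteDimensional ℝ E] [BorelSpace E] [μ.IsAddHaarMeasure]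

theorem AEMeasurable.comp_sub_smul (hg : AEMeasurable g μ) (z : E) (c : ℝ) :
    AEMeasurable (fun u => g (z - c • u)) μ := by
  rcases eq_or_ne c 0 with rfl | hc
  · simp
  · exact hg.comp_quasiMeasurePreserving <|
      (Measure.measurePreserving_sub_left μ z).quasiMeasurePreserving.comp
        (Measure.quasiMeasurePreserving_smul μ hc)

theorem continuousAt_kernelSmoothing (hψ : Integrable ψ μ) (hg : AEMeasurable g μ) {M : ℝ}
    (hgM : ∀ x, ‖g x‖ ≤ M) (hgz : ContinuousAt g z) :
    ContinuousAt (kernelSmoothing μ ψ g z) 0 := by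
  refine continuousAt_of_dominated (bound := fun u => ‖ψ u‖ * M)
    (Eventually.of_forall fun c => hψ.aestronglyMeasurable.mul
      (hg.comp_sub_smul z c).aestronglyMeasurable)
    (Eventually.of_forall fun c => ae_of_all _ fun u => ?_) (hψ.norm.mul_const M)
    (ae_of_all _ fun u => ?_)
  · rw [norm_mul]
    exact mul_le_mul_of_nonneg_left (hgM _) (norm_nonneg _)
  · have hzu : ContinuousAt (fun c : ℝ => z - c • u) 0 := by fun_prop
    exact continuousAt_const.mul (ContinuousAt.comp (by simpa using hgz) hzu)

theorem integral_mul_comp_inv_smul_sub (hc : 0 < c) :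
    ∫ x, g x * ψ (c⁻¹ • (z - x)) ∂μ = c ^ Module.finrank ℝ E * kernelSmoothing μ ψ g z c := by
  set f : E → ℝ := fun x => g x * ψ (c⁻¹ • (z - x))
  have hsub : ∫ u, f (z - c • u) ∂μ = (c ^ Module.finrank ℝ E)⁻¹ * ∫ x, f x ∂μ := by
    rw [Measure.integral_comp_smul_of_nonneg μ (fun y => f (z - y)) c (hR := hc.le),
      integral_sub_left_eq_self f μ z, smul_eq_mul]
  have hf : ∫ u, f (z - c • u) ∂μ = kernelSmoothing μ ψ g z c := by
    simp only [f, kernelSmoothing, sub_sub_cancel, inv_smul_smul₀ hc.ne', mul_comm]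
  rw [hf] at hsub
  rw [hsub, mul_inv_cancel_left₀ (pow_ne_zero _ hc.ne')]

section Moments

variable {Ω : Type*} [MeasurableSpace Ω] {P : Measure Ω} {X : Ω → E}

theorem integral_kernel_comp (hX : Measurable X) (hg : AEMeasurable g μ) (hgnn : ∀ x, 0 ≤ g x)
    (hlaw : P.map X = μ.withDensity fun x => ENNReal.ofReal (g x)) (hψ : Measurable ψ)
    (hc : 0 < c) :
    ∫ ω, ψ (c⁻¹ • (z - X ω)) ∂P = c ^ Module.finrank ℝ E * kernelSmoothing μ ψ g z c := by
  have hT : Measurable fun x : E => c⁻¹ • (z - x) := by fun_prop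
  rw [integral_comp_of_map_eq_withDensity (h := fun x => ψ (c⁻¹ • (z - x))) hX.aemeasurable hg
    hgnn hlaw (hψ.comp hT).aestronglyMeasurable, integral_mul_comp_inv_smul_sub hc]

theorem memLp_two_kernel_comp (hX : Measurable X)
    (hlaw : P.map X = μ.withDensity fun x => ENNReal.ofReal (g x)) (hψ : Measurable ψ)
    (hψsq : Integrable (fun u => ψ u ^ 2) μ) {M : ℝ} (hgM : ∀ x, g x ≤ M) (hc : c ≠ 0) :
    MemLp (fun ω => ψ (c⁻¹ • (z - X ω))) 2 P := by
  have hT : Measurable fun x : E => c⁻¹ • (z - x) := by fun_prop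
  refine (memLp_two_iff_integrable_sq (hψ.comp (hT.comp hX)).aestronglyMeasurable).2 ?_
  show Integrable (fun ω => ψ (c⁻¹ • (z - X ω)) ^ 2) P
  have hscaled : Integrable (fun x => ψ (c⁻¹ • (z - x)) ^ 2) μ :=
    (integrable_comp_sub_left (fun y => ψ (c⁻¹ • y) ^ 2) z).2
      ((integrable_comp_smul_iff μ (fun u => ψ u ^ 2) (inv_ne_zero hc)).2 hψsq)
  have hlawint := hscaled.withDensity_ofReal_of_le hgM
  rw [← hlaw] at hlawint
  exact (integrable_map_measure ((hψ.comp hT).pow_const 2).aestronglyMeasurable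
    hX.aemeasurable).1 hlawint

theorem variance_kernel_comp [IsProbabilityMeasure P] (hX : Measurable X)
    (hg : AEMeasurable g μ) (hgnn : ∀ x, 0 ≤ g x)
    (hlaw : P.map X = μ.withDensity fun x => ENNReal.ofReal (g x)) (hψ : Measurable ψ)
    (hψsq : Integrable (fun u => ψ u ^ 2) μ) {M : ℝ} (hgM : ∀ x, g x ≤ M) (hc : 0 < c) :
    variance (fun ω => ψ (c⁻¹ • (z - X ω))) P =
      c ^ Module.finrank ℝ E * kernelSmoothing μ (fun u => ψ u ^ 2) g z c
        - (c ^ Module.finrank ℝ E * kernelSmoothing μ ψ g z c) ^ 2 := by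
  rw [variance_eq_sub (memLp_two_kernel_comp hX hlaw hψ hψsq hgM hc.ne'),
    ← integral_kernel_comp hX hg hgnn hlaw hψ hc,
    ← integral_kernel_comp hX hg hgnn hlaw (hψ.pow_const 2) hc]
  rfl

end Moments

end KernelSmoothing

theorem mul_pow_mul_variance_kde {Ω : Type*} [MeasurableSpace Ω] {P : Measure Ω}
    [IsProbabilityMeasure P] {d m : ℕ} (hm : m ≠ 0) {φ g : (Fin d → ℝ) → ℝ} (hφ : Measurable φ)
    (hφsq : Integrable fun x => φ x ^ 2) (hg : AEMeasurable g) (hgnn : ∀ x, 0 ≤ g x) {M : ℝ}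
    (hgM : ∀ x, g x ≤ M) {Z : ℕ → Ω → (Fin d → ℝ)} (hZ : ∀ i, Measurable (Z i))
    (hindep : iIndepFun Z P)
    (hlaw : ∀ i, P.map (Z i) = volume.withDensity fun x => ENNReal.ofReal (g x))
    (z : Fin d → ℝ) {c : ℝ} (hc : 0 < c) :
    m * c ^ d * variance (kde d m φ Z c z) P =
      kernelSmoothing volume (fun u => φ u ^ 2) g z c
        - c ^ d * kernelSmoothing volume φ g z c ^ 2 := by
  set X : ℕ → Ω → ℝ := fun i ω => φ (c⁻¹ • (z - Z i ω))
  have hXindep : (↑(Finset.range m) : Set ℕ).Pairwise fun i j => IndepFun (X i) (X j) P :=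
    fun i _ j _ hij =>
      (hindep.comp (fun _ x => φ (c⁻¹ • (z - x))) fun _ => by fun_prop).indepFun hij
  have hsum : variance (∑ i ∈ Finset.range m, X i) P =
      m * (c ^ d * kernelSmoothing volume (fun u => φ u ^ 2) g z c
        - (c ^ d * kernelSmoothing volume φ g z c) ^ 2) := by
    rw [IndepFun.variance_sum (fun i _ => memLp_two_kernel_comp (hZ i) (hlaw i) hφ hφsq hgM hc.ne')
      hXindep]
    simp only [variance_kernel_comp (hZ _) hg hgnn (hlaw _) hφ hφsq hgM hc,
      Module.finrank_fin_fun, Finset.sum_const, Finset.card_range, nsmul_eq_mul]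
  have hkde : kde d m φ Z c z = fun ω => 1 / (m * c ^ d) * (∑ i ∈ Finset.range m, X i) ω := by
    funext ω
    simp [kde, X, Finset.sum_apply]
  rw [hkde, variance_const_mul, hsum]
  field_simp

theorem stmt_3_general
    {Ω : Type*} [MeasurableSpace Ω] (P : Measure Ω) [IsProbabilityMeasure P]
    (d : ℕ) (hd : 1 ≤ d)
    (φ : (Fin d → ℝ) → ℝ)
    (hφmeas : Measurable φ)
    (hφprob : ∫ x, φ x = 1)
    (hφsq : Integrable fun x => φ x ^ 2)
    (g : (Fin d → ℝ) → ℝ) (hgnn : ∀ x, 0 ≤ g x)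
    (hgprob : ∫ x, g x = 1)
    (hgbdd : BddAbove (Set.range g))
    (Z : ℕ → Ω → (Fin d → ℝ)) (hZmeas : ∀ i, Measurable (Z i))
    (hindep : iIndepFun Z P)
    (hlaw : ∀ i, Measure.map (Z i) P = volume.withDensity fun x => ENNReal.ofReal (g x))
    (z : Fin d → ℝ) (hgz : ContinuousAt g z)
    (b : ℕ → ℝ) (hbpos : ∀ m, 0 < b m) (hb0 : Tendsto b atTop (nhds 0)) :
    Tendsto (fun m : ℕ => (m : ℝ) * b m ^ d * variance (kde d m φ Z (b m) z) P)
      atTop (nhds (g z * ∫ x, φ x ^ 2)) := by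
  obtain ⟨M, hM⟩ := hgbdd
  have hgM : ∀ x, g x ≤ M := fun x => hM ⟨x, rfl⟩
  have hgnorm : ∀ x, ‖g x‖ ≤ M := fun x => (Real.norm_of_nonneg (hgnn x)).trans_le (hgM x)
  have hg : AEMeasurable g := (Integrable.of_integral_ne_zero (by simp [hgprob])).aemeasurable
  have hφ : Integrable φ := Integrable.of_integral_ne_zero (by simp [hφprob])
  have hA := (continuousAt_kernelSmoothing hφsq hg hgnorm hgz).tendsto.comp hb0
  have hB := (continuousAt_kernelSmoothing hφ hg hgnorm hgz).tendsto.comp hb0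
  have hbd : Tendsto (fun m => b m ^ d) atTop (𝓝 0) := by
    simpa [zero_pow (by omega : d ≠ 0)] using hb0.pow d
  have hlim := hA.sub (hbd.mul (hB.pow 2))
  rw [kernelSmoothing_zero, zero_mul, sub_zero] at hlim
  refine hlim.congr' ?_
  filter_upwards [eventually_ne_atTop 0] with m hm
  exact (mul_pow_mul_variance_kde hm hφmeas hφsq hg hgnn hgM hZmeas hindep hlaw z (hbpos m)).symm

/-- exact asymptotics of the variance,
`lim_{m→∞} m·b_m^d·Var(ĝ_{b_m}(z)) = g(z)·∫φ²` when `b_m → 0`. -/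
theorem stmt_3
    {Ω : Type*} [MeasurableSpace Ω] (P : Measure Ω) [IsProbabilityMeasure P]
    (d : ℕ) (hd : 1 ≤ d)
    (φ : (Fin d → ℝ) → ℝ)
    (hφmeas : Measurable φ) (hφnn : ∀ x, 0 ≤ φ x)
    (hφprob : ∫ x, φ x = 1)
    (hφsq : Integrable fun x => φ x ^ 2)
    (g : (Fin d → ℝ) → ℝ) (hgnn : ∀ x, 0 ≤ g x)
    (hgprob : ∫ x, g x = 1)
    (hgbdd : BddAbove (Set.range g))
    (Z : ℕ → Ω → (Fin d → ℝ)) (hZmeas : ∀ i, Measurable (Z i))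
    (hindep : iIndepFun Z P)
    (hlaw : ∀ i, Measure.map (Z i) P = volume.withDensity fun x => ENNReal.ofReal (g x))
    (z : Fin d → ℝ) (hgz : ContinuousAt g z)
    (b : ℕ → ℝ) (hbpos : ∀ m, 0 < b m) (hb0 : Tendsto b atTop (nhds 0)) :
    Tendsto (fun m : ℕ => (m : ℝ) * b m ^ d * variance (kde d m φ Z (b m) z) P)
      atTop (nhds (g z * ∫ x, φ x ^ 2)) :=
  stmt_3_general P d hd φ hφmeas hφprob hφsq g hgnn hgprob hgbdd Z hZmeas hindep hlaw z hgz b hbpos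
    hb0
end

section
/- For every z ∈ ℝ^d there exists a constant B > 0, depending only on ‖g‖_∞, ∫ φ(x)² dx, and φ(0), such that for every bandwidth b > 0, every sample size m ≥ 1, and every ε ∈ (0, 1], P{|ĝ_b(z) − E[ĝ_b(z)]| > ε} ≤ 2·exp(−B·m·b^d·ε²). -/
/-!
Write `X_i = φ((z - Z_i)/b)`, so that `ĝ_b(z) - E ĝ_b(z) = (m b^d)⁻¹ Σ_{i<m} (X_i - E X_i)`.
The summands are independent, bounded by `φ(0)` after centring, and by the change of variables
`x ↦ (z - x)/b` their variance is at most `E X_i² ≤ ‖g‖_∞ b^d ∫ φ²`. For a centred variable `Y`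
with `|Y| ≤ M` and `|t| M ≤ 1`, the inequality `eˣ ≤ 1 + x + x²` (valid for `|x| ≤ 1`) gives the
Bernstein-type bound `E e^{tY} ≤ exp(t² Var Y)`; Chernoff's bound for the sum and for its
negative, at `t` proportional to `ε`, gives the claim.
-/

open MeasureTheory ProbabilityTheory

open Real Finset Module

lemma Real.exp_le_one_add_add_sq {x : ℝ} (hx : |x| ≤ 1) : exp x ≤ 1 + x + x ^ 2 := by
  linarith [(abs_le.1 (abs_exp_sub_one_sub_id_le hx)).2]

lemma integrable_exp_mul_of_abs_le {Ω : Type*} [MeasurableSpace Ω] {P : Measure Ω}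
    [IsFiniteMeasure P] {Y : Ω → ℝ} (hY : AEMeasurable Y P) {M : ℝ}
    (hbdd : ∀ ω, |Y ω| ≤ M) (t : ℝ) : Integrable (fun ω => exp (t * Y ω)) P := by
  refine .of_bound (hY.const_mul t).exp.aestronglyMeasurable (exp (|t| * M))
    (.of_forall fun ω => ?_)
  rw [Real.norm_eq_abs, abs_of_pos (exp_pos _), exp_le_exp]
  calc t * Y ω ≤ |t| * |Y ω| := (le_abs_self _).trans (abs_mul t (Y ω)).le
    _ ≤ |t| * M := mul_le_mul_of_nonneg_left (hbdd ω) (abs_nonneg t)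

section Bernstein

variable {Ω : Type*} [MeasurableSpace Ω] {P : Measure Ω} [IsProbabilityMeasure P]

lemma mgf_sub_integral_le_exp_mul_variance {X : Ω → ℝ} (hX : AEMeasurable X P) {M t : ℝ}
    (hbdd : ∀ ω, |X ω - P[X]| ≤ M) (htM : |t| * M ≤ 1) :
    mgf (fun ω => X ω - P[X]) P t ≤ exp (t ^ 2 * variance X P) := by
  set Y := fun ω => X ω - P[X]
  have hYm : AEMeasurable Y P := hX.sub_const _
  have hY : Integrable Y P := .of_bound hYm.aestronglyMeasurable M (.of_forall hbdd)
  have hY2 : Integrable (fun ω => Y ω ^ 2) P :=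
    .of_bound (hYm.pow_const 2).aestronglyMeasurable (M ^ 2) (.of_forall fun ω => by
      simpa [abs_pow] using pow_le_pow_left₀ (abs_nonneg _) (hbdd ω) 2)
  have hmean : ∫ ω, Y ω ∂P = 0 := by
    have hXi : Integrable X P :=
      (hY.add (integrable_const P[X])).congr (.of_forall fun ω => by simp [Y])
    simp [Y, integral_sub hXi (integrable_const _)]
  have hpoint : ∀ ω, exp (t * Y ω) ≤ 1 + t * Y ω + t ^ 2 * Y ω ^ 2 := fun ω => by
    have htY : |t * Y ω| ≤ 1 := by
      rw [abs_mul]; exact (mul_le_mul_of_nonneg_left (hbdd ω) (abs_nonneg t)).trans htM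
    simpa [mul_pow] using Real.exp_le_one_add_add_sq htY
  have hlin : Integrable (fun ω => 1 + t * Y ω) P := (integrable_const 1).add (hY.const_mul t)
  have hquad : Integrable (fun ω => 1 + t * Y ω + t ^ 2 * Y ω ^ 2) P :=
    hlin.add (hY2.const_mul _)
  calc mgf Y P t ≤ ∫ ω, (1 + t * Y ω + t ^ 2 * Y ω ^ 2) ∂P :=
        integral_mono (integrable_exp_mul_of_abs_le hYm hbdd t) hquad hpoint
    _ = 1 + t ^ 2 * variance X P := by
        rw [integral_add hlin (hY2.const_mul _),
          integral_add (integrable_const 1) (hY.const_mul t), integral_const_mul,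
          integral_const_mul, hmean, variance_eq_integral hX]
        simp [Y]
    _ ≤ exp (t ^ 2 * variance X P) := by linarith [add_one_le_exp (t ^ 2 * variance X P)]

lemma abs_sub_integral_le_of_nonneg_of_le {X : Ω → ℝ} {M : ℝ} (h0 : ∀ ω, 0 ≤ X ω)
    (hM : ∀ ω, X ω ≤ M) (hint : Integrable X P) (ω : Ω) : |X ω - P[X]| ≤ M := by
  have hmean0 : 0 ≤ P[X] := integral_nonneg h0
  have hmeanM : P[X] ≤ M := by
    simpa using integral_mono hint (integrable_const M) hM
  exact abs_sub_le_iff.2 ⟨by linarith [hM ω], by linarith [h0 ω]⟩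

variable {ι : Type*} {X : ι → Ω → ℝ} {M v t : ℝ}

lemma mgf_sum_sub_integral_le (hX : ∀ i, Measurable (X i)) (hindep : iIndepFun X P)
    (hbdd : ∀ i ω, |X i ω - P[X i]| ≤ M) (hvar : ∀ i, variance (X i) P ≤ v)
    (htM : |t| * M ≤ 1) (s : Finset ι) :
    mgf (∑ i ∈ s, fun ω => X i ω - P[X i]) P t ≤ exp (#s * (t ^ 2 * v)) := by
  have hY : iIndepFun (fun i ω => X i ω - P[X i]) P :=
    hindep.comp (fun i y => y - ∫ ω, X i ω ∂P) fun _ => measurable_id.sub_const _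
  rw [hY.mgf_sum fun i => (hX i).sub_const _, exp_nat_mul, ← prod_const]
  refine prod_le_prod (fun i _ => mgf_nonneg) fun i _ => ?_
  calc mgf (fun ω => X i ω - P[X i]) P t ≤ exp (t ^ 2 * variance (X i) P) :=
        mgf_sub_integral_le_exp_mul_variance (hX i).aemeasurable (hbdd i) htM
    _ ≤ exp (t ^ 2 * v) := by gcongr; exact hvar i

theorem measureReal_le_abs_sum_sub_integral_le (hX : ∀ i, Measurable (X i))
    (hindep : iIndepFun X P) (hbdd : ∀ i ω, |X i ω - P[X i]| ≤ M)
    (hvar : ∀ i, variance (X i) P ≤ v) (ht : 0 ≤ t) (htM : t * M ≤ 1) (s : Finset ι) (r : ℝ) :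
    P.real {ω | r ≤ |∑ i ∈ s, (X i ω - P[X i])|} ≤ 2 * exp (-t * r + #s * (t ^ 2 * v)) := by
  set S := ∑ i ∈ s, fun ω => X i ω - P[X i]
  have hS : ∀ ω, S ω = ∑ i ∈ s, (X i ω - P[X i]) := fun ω => Finset.sum_apply ω s _
  have hint : ∀ t', Integrable (fun ω => exp (t' * S ω)) P := fun t' =>
    integrable_exp_mul_of_abs_le (by fun_prop) (M := #s * M) (fun ω => by
      rw [hS, ← nsmul_eq_mul]
      exact (abs_sum_le_sum_abs _ _).trans (sum_le_card_nsmul _ _ _ fun i _ => hbdd i ω)) t'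
  have hupper : P.real {ω | r ≤ S ω} ≤ exp (-t * r) * exp (#s * (t ^ 2 * v)) :=
    (measure_ge_le_exp_mul_mgf r ht (hint t)).trans (by
      gcongr
      exact mgf_sum_sub_integral_le hX hindep hbdd hvar (by rwa [abs_of_nonneg ht]) s)
  have hlower : P.real {ω | S ω ≤ -r} ≤ exp (-t * r) * exp (#s * (t ^ 2 * v)) :=
    (measure_le_le_exp_mul_mgf (-r) (neg_nonpos.2 ht) (hint (-t))).trans (by
      have := mgf_sum_sub_integral_le hX hindep hbdd hvar (t := -t)
        (by rwa [abs_neg, abs_of_nonneg ht]) s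
      rw [neg_mul_neg, neg_mul, ← neg_sq]
      gcongr)
  calc P.real {ω | r ≤ |∑ i ∈ s, (X i ω - P[X i])|}
      ≤ P.real ({ω | r ≤ S ω} ∪ {ω | S ω ≤ -r}) := by
        refine measureReal_mono (fun ω hω => ?_)
        simp only [Set.mem_ofPred_eq, Set.mem_union, hS] at hω ⊢
        exact (le_abs'.1 hω).symm
    _ ≤ P.real {ω | r ≤ S ω} + P.real {ω | S ω ≤ -r} := measureReal_union_le _ _
    _ ≤ 2 * exp (-t * r + #s * (t ^ 2 * v)) := by rw [exp_add]; linarith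

end Bernstein

lemma integral_withDensity_ofReal_le_mul {α : Type*} [MeasurableSpace α] {μ : Measure α}
    {g h : α → ℝ} {C : ℝ} (hgC : ∀ x, g x ≤ C) (hh : 0 ≤ h) (hint : Integrable h μ) :
    ∫ x, h x ∂μ.withDensity (fun x => ENNReal.ofReal (g x)) ≤ max C 0 * ∫ x, h x ∂μ := by
  have hle : μ.withDensity (fun x => ENNReal.ofReal (g x)) ≤ ENNReal.ofReal C • μ := by
    rw [← withDensity_const]
    exact withDensity_mono (.of_forall fun x => ENNReal.ofReal_le_ofReal (hgC x))
  calc ∫ x, h x ∂μ.withDensity (fun x => ENNReal.ofReal (g x))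
      ≤ ∫ x, h x ∂(ENNReal.ofReal C • μ) :=
        integral_mono_measure hle (.of_forall hh) (hint.smul_measure ENNReal.ofReal_ne_top)
    _ = max C 0 * ∫ x, h x ∂μ := by
        rw [integral_smul_measure, ENNReal.toReal_ofReal', smul_eq_mul]

section Kernel

variable {E : Type*} [NormedAddCommGroup E] [NormedSpace ℝ E] [MeasurableSpace E] [BorelSpace E]
  [FiniteDimensional ℝ E] {μ : Measure E} [μ.IsAddHaarMeasure]

lemma integral_comp_inv_smul_sub (F : E → ℝ) {b : ℝ} (hb : 0 ≤ b) (z : E) :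
    ∫ x, F (b⁻¹ • (z - x)) ∂μ = b ^ finrank ℝ E * ∫ x, F x ∂μ := by
  rw [integral_sub_left_eq_self (fun y => F (b⁻¹ • y)) μ z,
    Measure.integral_comp_inv_smul_of_nonneg μ F hb, smul_eq_mul]

lemma MeasureTheory.Integrable.comp_inv_smul_sub {F : E → ℝ} (hF : Integrable F μ) {b : ℝ}
    (hb : b ≠ 0) (z : E) :
    Integrable (fun x => F (b⁻¹ • (z - x))) μ :=
  ((integrable_comp_smul_iff μ F (inv_ne_zero hb)).2 hF).comp_sub_left z

lemma variance_kernel_comp_le {Ω : Type*} [MeasurableSpace Ω] {P : Measure Ω}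
    [IsProbabilityMeasure P] {φ : E → ℝ} (hφ : Measurable φ)
    (hφsq : Integrable (fun x => φ x ^ 2) μ)
    {g : E → ℝ} {C : ℝ} (hgC : ∀ x, g x ≤ C) {Z : Ω → E} (hZ : Measurable Z)
    (hlaw : P.map Z = μ.withDensity fun x => ENNReal.ofReal (g x)) {b : ℝ} (hb : 0 < b) (z : E) :
    variance (fun ω => φ (b⁻¹ • (z - Z ω))) P
      ≤ b ^ finrank ℝ E * (max C 0 * ∫ x, φ x ^ 2 ∂μ) := by
  have hf : Measurable fun x => φ (b⁻¹ • (z - x)) := hφ.comp (by fun_prop)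
  have hfZ : Measurable fun ω => φ (b⁻¹ • (z - Z ω)) := hf.comp hZ
  calc variance (fun ω => φ (b⁻¹ • (z - Z ω))) P
      ≤ P[(fun ω => φ (b⁻¹ • (z - Z ω))) ^ 2] :=
        variance_le_expectation_sq hfZ.aestronglyMeasurable
    _ = ∫ x, φ (b⁻¹ • (z - x)) ^ 2 ∂P.map Z :=
        (integral_map hZ.aemeasurable (hf.pow_const 2).aestronglyMeasurable).symm
    _ ≤ max C 0 * ∫ x, φ (b⁻¹ • (z - x)) ^ 2 ∂μ := by
        rw [hlaw]
        exact integral_withDensity_ofReal_le_mul hgC (fun x => sq_nonneg _)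
          (hφsq.comp_inv_smul_sub hb.ne' z)
    _ = b ^ finrank ℝ E * (max C 0 * ∫ x, φ x ^ 2 ∂μ) := by
        rw [integral_comp_inv_smul_sub (fun x => φ x ^ 2) hb.le]
        ring

end Kernel

lemma kde_sub_integral_kde {Ω : Type*} [MeasurableSpace Ω] {P : Measure Ω} {d m : ℕ}
    {φ : (Fin d → ℝ) → ℝ} {Z : ℕ → Ω → (Fin d → ℝ)} {b : ℝ} {z : Fin d → ℝ}
    (hint : ∀ i, Integrable (fun ω => φ (b⁻¹ • (z - Z i ω))) P) (ω : Ω) :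
    kde d m φ Z b z ω - ∫ ω', kde d m φ Z b z ω' ∂P
      = (m * b ^ d)⁻¹ *
          ∑ i ∈ range m, (φ (b⁻¹ • (z - Z i ω)) - ∫ ω', φ (b⁻¹ • (z - Z i ω')) ∂P) := by
  simp only [kde, integral_const_mul, integral_finsetSum _ fun i _ => hint i, sum_sub_distrib,
    one_div, mul_sub]

theorem stmt_8_general
    {Ω : Type*} [MeasurableSpace Ω] (P : Measure Ω) [IsProbabilityMeasure P]
    (d : ℕ)
    (φ : (Fin d → ℝ) → ℝ)
    (hφmeas : Measurable φ) (hφnn : ∀ x, 0 ≤ φ x)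
    (hφsq : Integrable fun x => φ x ^ 2)
    (hφmax : ∀ x, φ x ≤ φ 0)
    (g : (Fin d → ℝ) → ℝ)
    (hgbdd : BddAbove (Set.range g))
    (Z : ℕ → Ω → (Fin d → ℝ)) (hZmeas : ∀ i, Measurable (Z i))
    (hindep : iIndepFun Z P)
    (hlaw : ∀ i, Measure.map (Z i) P = volume.withDensity fun x => ENNReal.ofReal (g x))
    (z : Fin d → ℝ) :
    ∃ B > (0 : ℝ), ∀ b > (0 : ℝ), ∀ m : ℕ, 1 ≤ m → ∀ ε : ℝ, 0 < ε → ε ≤ 1 →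
      P {ω | ε < |kde d m φ Z b z ω - ∫ ω', kde d m φ Z b z ω' ∂P|}
        ≤ ENNReal.ofReal (2 * Real.exp (-B * m * b ^ d * ε ^ 2)) := by
  obtain ⟨C, hC⟩ := hgbdd
  set K := max C 0 * ∫ x, φ x ^ 2
  have hK : 0 ≤ K := mul_nonneg (le_max_right _ _) (integral_nonneg fun _ => sq_nonneg _)
  have hφ0 := hφnn 0
  -- `t = εβ` must satisfy `t φ(0) ≤ 1` for the mgf bound and `t K ≤ ε / 2` for the exponent.
  set β := (2 * K + φ 0 + 1)⁻¹
  have hβ : 0 < β := by positivity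
  have hβK : 2 * β * K ≤ 1 := by
    rw [mul_comm 2, mul_assoc, inv_mul_le_one₀ (by positivity)]; linarith
  have hβφ : β * φ 0 ≤ 1 := by
    rw [inv_mul_le_one₀ (by positivity)]; linarith
  refine ⟨β / 2, by positivity, fun b hb m hm ε hε hε1 => ?_⟩
  set X := fun i ω => φ (b⁻¹ • (z - Z i ω))
  have hXmeas : ∀ i, Measurable (X i) := fun i => hφmeas.comp (by fun_prop)
  have hXint : ∀ i, Integrable (X i) P := fun i =>
    .of_bound (hXmeas i).aestronglyMeasurable (φ 0)
      (.of_forall fun ω => by rw [Real.norm_eq_abs, abs_of_nonneg (hφnn _)]; exact hφmax _)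
  have hXbdd : ∀ i ω, |X i ω - P[X i]| ≤ φ 0 := fun i =>
    abs_sub_integral_le_of_nonneg_of_le (fun _ => hφnn _) (fun _ => hφmax _) (hXint i)
  have hXvar : ∀ i, variance (X i) P ≤ b ^ d * K := fun i => by
    simpa using variance_kernel_comp_le hφmeas hφsq (fun x => hC ⟨x, rfl⟩) (hZmeas i) (hlaw i) hb z
  have hXindep : iIndepFun X P :=
    hindep.comp (fun _ x => φ (b⁻¹ • (z - x))) fun _ => hφmeas.comp (by fun_prop)
  have hA : 0 < (m : ℝ) * b ^ d := mul_pos (by exact_mod_cast hm) (pow_pos hb d)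
  rw [← ofReal_measureReal]
  refine ENNReal.ofReal_le_ofReal ?_
  calc P.real {ω | ε < |kde d m φ Z b z ω - ∫ ω', kde d m φ Z b z ω' ∂P|}
      ≤ P.real {ω | ε * (m * b ^ d) ≤ |∑ i ∈ range m, (X i ω - P[X i])|} := by
        refine measureReal_mono fun ω hω => ?_
        simp only [Set.mem_ofPred_eq, kde_sub_integral_kde hXint, abs_mul, abs_inv,
          abs_of_pos hA] at hω ⊢
        rw [inv_mul_eq_div, lt_div_iff₀ hA] at hω
        exact hω.le
    _ ≤ 2 * exp (-(ε * β) * (ε * (m * b ^ d)) + #(range m) * ((ε * β) ^ 2 * (b ^ d * K))) :=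
        measureReal_le_abs_sum_sub_integral_le hXmeas hXindep hXbdd hXvar (by positivity)
          (by nlinarith) _ _
    _ ≤ 2 * exp (-(β / 2) * m * b ^ d * ε ^ 2) := by
        gcongr
        rw [card_range]
        nlinarith [mul_nonneg (mul_nonneg hA.le (sq_nonneg ε)) hβ.le]

/-- Bernstein-type deviation bound
`P{|ĝ_b(z) − E[ĝ_b(z)]| > ε} ≤ 2·exp(−B·m·b^d·ε²)` for `ε ∈ (0,1]`. -/
theorem stmt_8
    {Ω : Type*} [MeasurableSpace Ω] (P : Measure Ω) [IsProbabilityMeasure P]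
    (d : ℕ) (hd : 1 ≤ d)
    (φ : (Fin d → ℝ) → ℝ)
    (hφmeas : Measurable φ) (hφnn : ∀ x, 0 ≤ φ x)
    (hφprob : ∫ x, φ x = 1)
    (hφsq : Integrable fun x => φ x ^ 2)
    (hφmax : ∀ x, φ x ≤ φ 0)
    (g : (Fin d → ℝ) → ℝ) (hgnn : ∀ x, 0 ≤ g x)
    (hgprob : ∫ x, g x = 1)
    (hgbdd : BddAbove (Set.range g))
    (Z : ℕ → Ω → (Fin d → ℝ)) (hZmeas : ∀ i, Measurable (Z i))
    (hindep : iIndepFun Z P)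
    (hlaw : ∀ i, Measure.map (Z i) P = volume.withDensity fun x => ENNReal.ofReal (g x))
    (z : Fin d → ℝ) :
    ∃ B > (0 : ℝ), ∀ b > (0 : ℝ), ∀ m : ℕ, 1 ≤ m → ∀ ε : ℝ, 0 < ε → ε ≤ 1 →
      P {ω | ε < |kde d m φ Z b z ω - ∫ ω', kde d m φ Z b z ω' ∂P|}
        ≤ ENNReal.ofReal (2 * Real.exp (-B * m * b ^ d * ε ^ 2)) :=
  stmt_8_general P d φ hφmeas hφnn hφsq hφmax g hgbdd Z hZmeas hindep hlaw z
end

section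
/- Let K ≥ 1 be an integer and let a_1, …, a_K, â_1, …, â_K, δ_1, …, δ_K be nonnegative reals such that S := Σ_{k'} a_{k'} > 0, |â_k − a_k| ≤ δ_k for every k, and Σ_{k'} δ_{k'} ≤ S/2. Then Σ_{k'} â_{k'} > 0 and for every k ∈ {1, …, K}: |â_k/(Σ_{k'} â_{k'}) − a_k/S| ≤ δ_k/S + 3·(Σ_{k'} δ_{k'})/S. In particular, if δ_k ≤ δ for every k, then |â_k/(Σ_{k'} â_{k'}) − a_k/S| ≤ (3K + 1)·δ/S. -/
/-!
Write `S = Σ a`, `T = Σ â` and `D = Σ δ`. Then `|T - S| ≤ D ≤ S / 2`, so `T ≥ S / 2 > 0`. Since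
`â_k S - a_k T = (â_k - a_k) S + a_k (S - T)` and `a_k ≤ S`, the numerator of `â_k / T - a_k / S`
is at most `(δ_k + D) S`, and dividing by `T S ≥ S² / 2` gives `2 (δ_k + D) / S ≤ (δ_k + 3 D) / S`,
the last step because `δ_k ≤ D`.
-/

open Finset

theorem Finset.abs_sum_sub_sum_le {ι G : Type*} [AddCommGroup G] [LinearOrder G]
    [IsOrderedAddMonoid G] (s : Finset ι) {f g d : ι → G}
    (h : ∀ i ∈ s, |f i - g i| ≤ d i) : |∑ i ∈ s, f i - ∑ i ∈ s, g i| ≤ ∑ i ∈ s, d i := by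
  rw [← sum_sub_distrib]
  exact (abs_sum_le_sum_abs _ _).trans (sum_le_sum h)

theorem abs_div_sub_div_le_of_abs_sub_le {x x' S T d D : ℝ} (hS : 0 < S) (hx : 0 ≤ x)
    (hxS : x ≤ S) (hT : S / 2 ≤ T) (hx' : |x' - x| ≤ d) (hST : |T - S| ≤ D) :
    |x' / T - x / S| ≤ 2 * (d + D) / S := by
  have hT0 : 0 < T := by linarith
  have hnum : |(x' - x) * S + x * (S - T)| ≤ (d + D) * S :=
    calc |(x' - x) * S + x * (S - T)| ≤ |x' - x| * S + x * |S - T| := by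
          refine (abs_add_le _ _).trans_eq ?_
          rw [abs_mul, abs_mul, abs_of_pos hS, abs_of_nonneg hx]
      _ ≤ d * S + S * D := by gcongr; rwa [abs_sub_comm]
      _ = (d + D) * S := by ring
  calc |x' / T - x / S| = |(x' - x) * S + x * (S - T)| / (T * S) := by
        rw [div_sub_div _ _ hT0.ne' hS.ne', abs_div, abs_of_pos (mul_pos hT0 hS)]
        congr 2; ring
    _ ≤ (d + D) * S / (T * S) := by gcongr
    _ = (d + D) / T := by field_simp
    _ ≤ 2 * (d + D) / S := by
        have hdD : 0 ≤ d + D := add_nonneg ((abs_nonneg _).trans hx') ((abs_nonneg _).trans hST)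
        rw [div_le_div_iff₀ hT0 hS]
        nlinarith

theorem stmt_10_general
    (K : ℕ)
    (a ahat δ : Fin K → ℝ)
    (ha : ∀ k, 0 ≤ a k)
    (hS : 0 < ∑ k, a k)
    (hclose : ∀ k, |ahat k - a k| ≤ δ k)
    (hsmall : ∑ k, δ k ≤ (∑ k, a k) / 2) :
    (0 < ∑ k, ahat k) ∧
    (∀ k, |ahat k / (∑ k', ahat k') - a k / (∑ k', a k')|
        ≤ δ k / (∑ k', a k') + 3 * (∑ k', δ k') / (∑ k', a k')) ∧
    (∀ δ₀ : ℝ, (∀ k, δ k ≤ δ₀) → ∀ k,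
      |ahat k / (∑ k', ahat k') - a k / (∑ k', a k')|
        ≤ (3 * K + 1) * δ₀ / (∑ k', a k')) := by
  have hδ (k : Fin K) : 0 ≤ δ k := (abs_nonneg _).trans (hclose k)
  have hTS : |∑ k, ahat k - ∑ k, a k| ≤ ∑ k, δ k := abs_sum_sub_sum_le univ fun k _ => hclose k
  have hT : (∑ k, a k) / 2 ≤ ∑ k, ahat k := by linarith [neg_abs_le (∑ k, ahat k - ∑ k, a k)]
  have hratio (k : Fin K) : |ahat k / (∑ k', ahat k') - a k / (∑ k', a k')|
      ≤ δ k / (∑ k', a k') + 3 * (∑ k', δ k') / (∑ k', a k') := by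
    have hδD : δ k ≤ ∑ k', δ k' := single_le_sum (fun k' _ => hδ k') (mem_univ k)
    calc _ ≤ 2 * (δ k + ∑ k', δ k') / ∑ k', a k' :=
          abs_div_sub_div_le_of_abs_sub_le hS (ha k)
            (single_le_sum (fun k' _ => ha k') (mem_univ k)) hT (hclose k) hTS
      _ ≤ _ := by rw [← add_div]; gcongr; linarith
  refine ⟨by linarith, hratio, fun δ₀ hδ₀ k => (hratio k).trans ?_⟩
  have hD : ∑ k, δ k ≤ K * δ₀ := by simpa using sum_le_card_nsmul univ δ δ₀ fun k _ => hδ₀ k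
  rw [← add_div]
  gcongr
  linarith [hδ₀ k]

/-- deterministic perturbation lemma for normalized ratios. If
`|â_k − a_k| ≤ δ_k` and `Σ δ_k ≤ (Σ a_k)/2`, then `Σ â_k > 0` and
`|â_k/Σâ − a_k/Σa| ≤ δ_k/Σa + 3·(Σδ)/Σa`; in particular with `δ_k ≤ δ`,
`|â_k/Σâ − a_k/Σa| ≤ (3K+1)·δ/Σa`. -/
theorem stmt_10
    (K : ℕ) (hK : 1 ≤ K)
    (a ahat δ : Fin K → ℝ)
    (ha : ∀ k, 0 ≤ a k) (hahat : ∀ k, 0 ≤ ahat k) (hδ : ∀ k, 0 ≤ δ k)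
    (hS : 0 < ∑ k, a k)
    (hclose : ∀ k, |ahat k - a k| ≤ δ k)
    (hsmall : ∑ k, δ k ≤ (∑ k, a k) / 2) :
    (0 < ∑ k, ahat k) ∧
    (∀ k, |ahat k / (∑ k', ahat k') - a k / (∑ k', a k')|
        ≤ δ k / (∑ k', a k') + 3 * (∑ k', δ k') / (∑ k', a k')) ∧
    (∀ δ₀ : ℝ, (∀ k, δ k ≤ δ₀) → ∀ k,
      |ahat k / (∑ k', ahat k') - a k / (∑ k', a k')|
        ≤ (3 * K + 1) * δ₀ / (∑ k', a k')) :=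
  stmt_10_general K a ahat δ ha hS hclose hsmall
end

section
/- Let K ≥ 2 be an integer, 𝒵 a nonempty set, and 0 < L ≤ U. Suppose g_1, …, g_K : 𝒵 → [L, U] and ĝ_1, …, ĝ_K : 𝒵 → [0, ∞) satisfy sup_{z ∈ 𝒵} |ĝ_k(z) − g_k(z)| ≤ ε_{2,k} for every k; let π = (π_1, …, π_K) and π̂ = (π̂_1, …, π̂_K) be probability vectors with |π̂_k − π_k| ≤ ε₁ for every k. Define p_k(z) = g_k(z)π_k/Σ_{k'} g_{k'}(z)π_{k'} and p̂_k(z) = ĝ_k(z)π̂_k/Σ_{k'} ĝ_{k'}(z)π̂_{k'}. If Σ_{k=1}^K (ε_{2,k} + U·ε₁) ≤ L/2, then p̂ is well defined and sup_{z ∈ 𝒵} |p̂_k(z) − p_k(z)| ≤ (3K + 1)·(max_k ε_{2,k} + U·ε₁)/L for every k. -/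
/-!
With `a k = ĝ_k(z) π̂_k` and `b k = g_k(z) π_k`, every `|a k - b k|` is at most
`δ k = ε_{2,k} + U ε₁`, so the two normalising sums differ by at most `∑ δ ≤ L / 2` while
`∑ b ≥ L`; in particular `∑ a ≥ L / 2`. Writing `a/A - b/B = ((a - b) + (b/B)(B - A)) / A`
with `0 ≤ b/B ≤ 1` bounds each ratio error by `2 (δ k + ∑ δ) / L ≤ (2K + 2) max δ / L`.
-/

open Finset

lemma abs_div_sub_div_le_of_le {a b A B : ℝ} (hA : 0 < A) (hb : 0 ≤ b) (hbB : b ≤ B) :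
    |a / A - b / B| ≤ (|a - b| + |A - B|) / A := by
  have hr₀ : 0 ≤ b / B := div_nonneg hb (hb.trans hbB)
  have hr₁ : b / B ≤ 1 := div_le_one_of_le₀ hbB (hb.trans hbB)
  have hrB : b / B * B = b := div_mul_cancel_of_imp fun hB => le_antisymm (hB ▸ hbB) hb
  generalize b / B = r at hr₀ hr₁ hrB ⊢
  have hsplit : a / A - r = ((a - b) + r * (B - A)) / A := by
    field_simp
    linear_combination -hrB
  rw [hsplit, abs_div, abs_of_pos hA, abs_sub_comm A B]
  gcongr
  calc |a - b + r * (B - A)| ≤ |a - b| + r * |B - A| := by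
        grw [abs_add_le, abs_mul, abs_of_nonneg hr₀]
    _ ≤ |a - b| + |B - A| := by gcongr; exact mul_le_of_le_one_left (abs_nonneg _) hr₁

lemma abs_mul_sub_mul_le_add {x x' y y' ε η U : ℝ} (hx : |x' - x| ≤ ε) (hy' : |y'| ≤ 1)
    (hxU : |x| ≤ U) (hy : |y' - y| ≤ η) : |x' * y' - x * y| ≤ ε + U * η :=
  calc |x' * y' - x * y| = |(x' - x) * y' + x * (y' - y)| := by ring_nf
    _ ≤ |x' - x| * |y'| + |x| * |y' - y| := by grw [abs_add_le, abs_mul, abs_mul]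
    _ ≤ ε * 1 + U * η := by
      gcongr
      exacts [(abs_nonneg _).trans hx, (abs_nonneg _).trans hxU]
    _ = ε + U * η := by rw [mul_one]

lemma le_sum_mul_of_le {ι : Type*} [Fintype ι] {f w : ι → ℝ} {L : ℝ}
    (hw : ∀ i, 0 ≤ w i) (hwsum : ∑ i, w i = 1) (hf : ∀ i, L ≤ f i) : L ≤ ∑ i, f i * w i :=
  calc L = ∑ i, L * w i := by rw [← mul_sum, hwsum, mul_one]
    _ ≤ ∑ i, f i * w i := by gcongr with i; exacts [hw i, hf i]

lemma abs_sum_sub_sum_le {ι : Type*} [Fintype ι] {a b δ : ι → ℝ} (h : ∀ i, |a i - b i| ≤ δ i) :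
    |∑ i, a i - ∑ i, b i| ≤ ∑ i, δ i := by
  rw [← sum_sub_distrib]
  exact (abs_sum_le_sum_abs _ _).trans (sum_le_sum fun i _ => h i)

lemma abs_div_sum_sub_div_sum_le {ι : Type*} [Fintype ι] {a b δ : ι → ℝ} {L : ℝ} (hL : 0 < L)
    (hb : ∀ i, 0 ≤ b i) (hbsum : L ≤ ∑ i, b i) (hab : ∀ i, |a i - b i| ≤ δ i)
    (hδ : ∑ i, δ i ≤ L / 2) :
    L / 2 ≤ ∑ i, a i ∧ ∀ i, |a i / ∑ j, a j - b i / ∑ j, b j| ≤ 2 * (δ i + ∑ j, δ j) / L := by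
  have hsum := abs_sum_sub_sum_le hab
  have hA : L / 2 ≤ ∑ i, a i := by linarith [(abs_le.mp hsum).1]
  refine ⟨hA, fun i => ?_⟩
  calc |a i / ∑ j, a j - b i / ∑ j, b j|
      ≤ (|a i - b i| + |∑ j, a j - ∑ j, b j|) / ∑ j, a j :=
        abs_div_sub_div_le_of_le (by linarith) (hb i)
          (single_le_sum (fun j _ => hb j) (mem_univ i))
    _ ≤ (δ i + ∑ j, δ j) / (L / 2) := by
        gcongr
        · linarith [(abs_nonneg _).trans (hab i), (abs_nonneg _).trans hsum]
        · exact hab i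
    _ = 2 * (δ i + ∑ j, δ j) / L := by field_simp

/-- deterministic uniform ratio-perturbation lemma underlying
Theorems 1 and 2 of the paper. -/
theorem stmt_11
    (K : ℕ) (hK : 2 ≤ K)
    (𝒵 : Type*) [Nonempty 𝒵]
    (L U : ℝ) (hL : 0 < L)
    (g ghat : Fin K → 𝒵 → ℝ)
    (hg : ∀ k z, g k z ∈ Set.Icc L U)
    (ε₂ : Fin K → ℝ)
    (hclose : ∀ k z, |ghat k z - g k z| ≤ ε₂ k)
    (π πhat : Fin K → ℝ)
    (hπnn : ∀ k, 0 ≤ π k) (hπsum : ∑ k, π k = 1)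
    (hπhatnn : ∀ k, 0 ≤ πhat k) (hπhatsum : ∑ k, πhat k = 1)
    (ε₁ : ℝ) (hπclose : ∀ k, |πhat k - π k| ≤ ε₁)
    (hsmall : ∑ k : Fin K, (ε₂ k + U * ε₁) ≤ L / 2) :
    (∀ z, 0 < ∑ k', ghat k' z * πhat k') ∧
    (∀ k z,
      |ghat k z * πhat k / (∑ k', ghat k' z * πhat k')
          - g k z * π k / (∑ k', g k' z * π k')|
        ≤ (3 * K + 1) *
            ((Finset.univ.sup' (Finset.univ_nonempty_iff.mpr ⟨⟨0, by omega⟩⟩) ε₂) + U * ε₁)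
            / L) := by
  obtain ⟨z₀⟩ := ‹Nonempty 𝒵›
  have hg₀ : ∀ k z, 0 ≤ g k z := fun k z => hL.le.trans (hg k z).1
  have hterm : ∀ k z, |ghat k z * πhat k - g k z * π k| ≤ ε₂ k + U * ε₁ := by
    intro k z
    have hπhat_le : |πhat k| ≤ 1 := by
      rw [abs_of_nonneg (hπhatnn k), ← hπhatsum]
      exact single_le_sum (fun j _ => hπhatnn j) (mem_univ k)
    have hg_le : |g k z| ≤ U := (abs_of_nonneg (hg₀ k z)).trans_le (hg k z).2
    exact abs_mul_sub_mul_le_add (hclose k z) hπhat_le hg_le (hπclose k)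
  have hratio z := abs_div_sum_sub_div_sum_le hL (fun k => mul_nonneg (hg₀ k z) (hπnn k))
    (le_sum_mul_of_le hπnn hπsum fun k => (hg k z).1) (hterm · z) hsmall
  refine ⟨fun z => (half_pos hL).trans_le (hratio z).1, fun k z => ((hratio z).2 k).trans ?_⟩
  set E := univ.sup' (univ_nonempty_iff.mpr ⟨⟨0, by omega⟩⟩) ε₂ + U * ε₁
  have hδE : ∀ k, ε₂ k + U * ε₁ ≤ E := fun k => by grw [le_sup' ε₂ (mem_univ k)]
  have hE : 0 ≤ E := (abs_nonneg _).trans ((hterm k z₀).trans (hδE k))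
  have hsumE : ∑ k, (ε₂ k + U * ε₁) ≤ K * E := by
    simpa using sum_le_sum fun k (_ : k ∈ univ) => hδE k
  have hK₁ : (1 : ℝ) ≤ K := by exact_mod_cast one_le_two.trans hK
  gcongr ?_ / L
  nlinarith [hδE k]
end

section
/- Let (Ω, ℱ, P) be a probability space, 𝒵 a measurable space, Z : Ω → 𝒵 and Y : Ω → {1, …, K} measurable, and let p : 𝒵 → Δ^{K−1} be a measurable map such that for every k, p_k(Z) is a version of the conditional probability P(Y = k | Z). Let p̂ : 𝒵 → Δ^{K−1} be measurable and ε ≥ 0 with |p̂_k(z) − p_k(z)| ≤ ε for every z ∈ 𝒵 and every k. Then for every k, |E[1{Y = k} | σ(p̂(Z))] − p̂_k(Z)| ≤ ε almost surely; that is, conditionally on the predicted probability vector p̂(Z), the true probability of each class is within ε of its predicted value. -/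
open MeasureTheory ProbabilityTheory

/-!
Conditioning on `p̂(Z)` is coarser than conditioning on `Z`, so by the tower property
`E[1{Y = k} | p̂(Z)] = E[p_k(Z) | p̂(Z)]`. Since `p̂_k(Z)` is `σ(p̂(Z))`-measurable,
subtracting it gives `E[p_k(Z) - p̂_k(Z) | p̂(Z)]`, and conditional expectation preserves
the uniform bound `|p_k - p̂_k| ≤ ε`.
-/

theorem ae_abs_condExp_sub_le_of_ae_abs_sub_le {α : Type*} {m m₀ : MeasurableSpace α}
    {μ : Measure α} [IsFiniteMeasure μ] (hm : m ≤ m₀) {f g : α → ℝ} {ε : ℝ}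
    (hf : Integrable f μ) (hg : StronglyMeasurable[m] g) (hfg : ∀ᵐ x ∂μ, |f x - g x| ≤ ε) :
    ∀ᵐ x ∂μ, |μ[f | m] x - g x| ≤ ε := by
  have hg_int : Integrable g μ := by
    have hfg_int : Integrable (f - g) μ :=
      Integrable.of_bound (hf.aestronglyMeasurable.sub (hg.mono hm).aestronglyMeasurable) ε hfg
    simpa using hf.sub hfg_int
  have hcondExp_g : μ[g | m] = g := condExp_of_stronglyMeasurable hm hg hg_int
  filter_upwards [condExp_sub hf hg_int m, ae_bdd_abs_condExp_of_ae_bdd_abs (m := m) hfg]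
    with x hsub hbdd
  rw [hcondExp_g] at hsub
  change |μ[f - g | m] x| ≤ ε at hbdd
  rwa [hsub] at hbdd

theorem stmt_15_general
    {Ω : Type*} [MeasurableSpace Ω] (P : Measure Ω) [IsProbabilityMeasure P]
    {𝒵 : Type*} [MeasurableSpace 𝒵]
    (K : ℕ)
    (Z : Ω → 𝒵) (hZ : Measurable Z)
    (Y : Ω → Fin K)
    (p : 𝒵 → Fin K → ℝ)
    (hpcond : ∀ k, (fun ω => p (Z ω) k) =ᵐ[P]
      condExp (MeasurableSpace.comap Z inferInstance) P
        (fun ω => if Y ω = k then (1 : ℝ) else 0))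
    (phat : 𝒵 → Fin K → ℝ) (hphat : Measurable phat)
    (ε : ℝ)
    (hclose : ∀ z k, |phat z k - p z k| ≤ ε) :
    ∀ k, ∀ᵐ ω ∂P,
      |condExp (MeasurableSpace.comap (fun ω => phat (Z ω)) inferInstance) P
          (fun ω => if Y ω = k then (1 : ℝ) else 0) ω
        - phat (Z ω) k| ≤ ε := by
  intro k
  set mphat : MeasurableSpace Ω := MeasurableSpace.comap (fun ω => phat (Z ω)) inferInstance
  have hle : mphat ≤ MeasurableSpace.comap Z inferInstance :=
    (hphat.comp (comap_measurable Z)).comap_le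
  have htower : P[fun ω => if Y ω = k then (1 : ℝ) else 0 | mphat]
      =ᵐ[P] P[fun ω => p (Z ω) k | mphat] :=
    (condExp_condExp_of_le hle hZ.comap_le).symm.trans (condExp_congr_ae (hpcond k).symm)
  have hphat_sm : StronglyMeasurable[mphat] (fun ω => phat (Z ω) k) :=
    ((measurable_pi_apply k).comp (comap_measurable _ : Measurable[mphat] _)).stronglyMeasurable
  filter_upwards [htower, ae_abs_condExp_sub_le_of_ae_abs_sub_le (hle.trans hZ.comap_le)
    (integrable_condExp.congr (hpcond k).symm) hphat_sm
    (ae_of_all _ fun ω => abs_sub_comm (p (Z ω) k) _ ▸ hclose (Z ω) k)] with ω hω hbound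
  rwa [hω]

/-- a uniform pointwise bound on the prediction error turns into a
full-calibration bound: conditioned on the predicted probability vector
`p̂(Z)`, the true probability of each class is within `ε` of the predicted
value. -/
theorem stmt_15
    {Ω : Type*} [MeasurableSpace Ω] (P : Measure Ω) [IsProbabilityMeasure P]
    {𝒵 : Type*} [MeasurableSpace 𝒵]
    (K : ℕ) (hK : 1 ≤ K)
    (Z : Ω → 𝒵) (hZ : Measurable Z)
    (Y : Ω → Fin K) (hY : Measurable Y)
    (p : 𝒵 → Fin K → ℝ) (hp : Measurable p)
    (hpnn : ∀ z k, 0 ≤ p z k) (hpsum : ∀ z, ∑ k, p z k = 1)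
    (hpcond : ∀ k, (fun ω => p (Z ω) k) =ᵐ[P]
      condExp (MeasurableSpace.comap Z inferInstance) P
        (fun ω => if Y ω = k then (1 : ℝ) else 0))
    (phat : 𝒵 → Fin K → ℝ) (hphat : Measurable phat)
    (hphatnn : ∀ z k, 0 ≤ phat z k) (hphatsum : ∀ z, ∑ k, phat z k = 1)
    (ε : ℝ) (hε : 0 ≤ ε)
    (hclose : ∀ z k, |phat z k - p z k| ≤ ε) :
    ∀ k, ∀ᵐ ω ∂P,
      |condExp (MeasurableSpace.comap (fun ω => phat (Z ω)) inferInstance) P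
          (fun ω => if Y ω = k then (1 : ℝ) else 0) ω
        - phat (Z ω) k| ≤ ε :=
  stmt_15_general P K Z hZ Y p hpcond phat hphat ε hclose
end
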